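/- Simplified form of the tradeoff recursion (Lemma 3.10): For each i and c, the optimization problem defining ĥ_i(c) admits an optimal solution in which the allocation and payment are constant functions of v_i; consequently ĥ_i(c) = max over Y ∈ [0,1] of E_{v_i∼f_i}[ĥ_{i+1}( Y·(v_i − E[v_i]) + c )] + Y·E[v_i], with the corresponding constant payment Y·E[v_i] − c. -/

import Mathlib

/-!
Lemma 3.10 (simplified form of the tradeoff recursion): for each period `i` and
bound `c`, the optimization problem defining `ĥ_i(c)` admits an optimal
solution whose allocation and payment are constant in the report; consequently
`ĥ_i(c) = max_{Y ∈ [0,1]} E_{v_i}[ĥ_{i+1}(Y (v_i - E[v_i]) + c)] + Y E[v_i]`,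
the corresponding constant payment being `Y E[v_i] - c`.
Periods are 0-indexed.
-/

open MeasureTheory

namespace Stmt9

open scoped Classical

variable {k : ℕ}

/-- Expectation of an extended-real-valued function, with value `⊥` when the
function is not a.e. finite and integrable. -/
noncomputable def eExp (μ : Measure ℝ) (φ : ℝ → EReal) : EReal :=
  if (∀ᵐ v ∂μ, ⊥ < φ v ∧ φ v < ⊤) ∧ Integrable (fun v => (φ v).toReal) μ then
    ((∫ v, (φ v).toReal ∂μ : ℝ) : EReal)
  else ⊥

/-- The extended-real-valued objective of the problem defining `ĥ_i(c)`. -/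
noncomputable def hObj (μ : Measure ℝ) (g : ℝ → EReal) (c : ℝ) (x p : ℝ → ℝ) : EReal :=
  if (∀ᵐ v ∂μ, ⊥ < g (v * x v - p v) ∧ g (v * x v - p v) < ⊤)
      ∧ Integrable (fun v => (g (v * x v - p v)).toReal) μ then
    ((∫ v, (g (v * x v - p v)).toReal ∂μ + c + p 0 : ℝ) : EReal)
  else ⊥

/-- The optimal value of the problem defining `ĥ_i(c)`. -/
noncomputable def hStep (μ : Measure ℝ) (g : ℝ → EReal) (c : ℝ) : EReal :=
  sSup {r : EReal | ∃ x p : ℝ → ℝ, (∀ v, x v ∈ Set.Icc (0 : ℝ) 1) ∧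
    (∀ v v', v * x v' - p v' ≤ v * x v - p v) ∧
    (∫ v, (v * x v - p v) ∂μ) = c ∧ r = hObj μ g c x p}

noncomputable def hHatAux (μ : Fin k → Measure ℝ) : ℕ → ℝ → EReal
  | 0 => fun c => if 0 ≤ c then (0 : EReal) else ⊥
  | (m + 1) => fun c =>
      if hm : m < k then
        hStep (μ ⟨k - (m + 1), by omega⟩) (hHatAux μ m) c
      else ⊥

/-- The cumulative tradeoff function `ĥ` of (0-indexed) period `i`. -/
noncomputable def hHat (μ : Fin k → Measure ℝ) (i : ℕ) : ℝ → EReal :=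
  hHatAux μ (k - i)

end Stmt9

/-!
The utility `u v = v x(v) - p(v)` of an incentive-compatible mechanism is convex, nondecreasing
and 1-Lipschitz. Let `l` be the affine function of slope `Y ∈ [0,1]` with `l 0 = u 0` and the
same mean `c` as `u`; it is the utility of the constant mechanism with allocation `Y`, which has
the same payment `p 0`. As `u - l` is convex, vanishes at `0` and has mean zero, `u` crosses `l`
once from below, and a supergradient of the concave `ĥ_{i+1}` at the crossing level gives
`E[ĥ_{i+1}(u)] ≤ E[ĥ_{i+1}(l)]`. The maximum over `Y` is attained: the feasible `Y` form a compact
set on which the objective is continuous by dominated convergence, the distribution having no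
atoms. The maximizers then show that `ĥ_i` is again monotone and concave on `[0, ∞)` and `-∞`
below, which drives the induction over the periods.
-/

open Set Filter

theorem ConcaveOn.exists_le_add_mul_sub {G : ℝ → ℝ} (hG : ConcaveOn ℝ (Ici 0) G) {w : ℝ}
    (hw : 0 < w) :
    ∃ K, ∀ a b, (0 ≤ a ∧ a ≤ b ∧ b ≤ w) ∨ (w ≤ b ∧ b ≤ a) → G a ≤ G b + K * (a - b) := by
  set S := (fun y => (G y - G w) / (y - w)) '' Ioi w
  have hS : ∀ z, 0 ≤ z → z < w → ∀ s ∈ S, s ≤ (G w - G z) / (w - z) := by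
    rintro z hz hzw _ ⟨y, hy, rfl⟩
    exact hG.slope_anti_adjacent hz (by simp; linarith [mem_Ioi.1 hy]) hzw hy
  have hSne : S.Nonempty := (nonempty_Ioi).image _
  have hSbdd : BddAbove S := ⟨_, hS 0 le_rfl hw⟩
  refine ⟨sSup S, ?_⟩
  rintro a b (⟨ha, hab, hbw⟩ | ⟨hwb, hba⟩)
  · rcases hab.eq_or_lt with rfl | hab
    · simp
    have hK : sSup S ≤ (G b - G a) / (b - a) := by
      rcases hbw.eq_or_lt with rfl | hbw
      · exact csSup_le hSne (hS a ha hab)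
      · exact (csSup_le hSne (hS b (ha.trans hab.le) hbw)).trans
          (hG.slope_anti_adjacent ha (by simp; linarith) hab hbw)
    rw [le_div_iff₀ (sub_pos.2 hab)] at hK
    linarith
  · rcases hba.eq_or_lt with rfl | hba
    · simp
    have hK : (G a - G b) / (a - b) ≤ sSup S := by
      rcases hwb.eq_or_lt with rfl | hwb
      · exact le_csSup hSbdd ⟨a, hba, rfl⟩
      · exact (hG.slope_anti_adjacent hw.le (by simp; linarith) hwb hba).trans
          (le_csSup hSbdd ⟨b, hwb, rfl⟩)
    rw [div_le_iff₀ (sub_pos.2 hba)] at hK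
    linarith

theorem ConvexOn.exists_sign_change {d : ℝ → ℝ} (hd : ConvexOn ℝ univ d) (hd0 : d 0 = 0) {h : ℝ}
    (hh : 0 ≤ h) : ∃ t, (∀ v, 0 ≤ v → v ≤ t → d v ≤ 0) ∧ ∀ v, t < v → v ≤ h → 0 < d v := by
  set T := Icc 0 h ∩ {v | d v ≤ 0}
  have hcont : Continuous d := continuousOn_univ.1 (hd.continuousOn isOpen_univ)
  have hT : IsCompact T := isCompact_Icc.inter_right (isClosed_le hcont continuous_const)
  have htT : sSup T ∈ T := hT.sSup_mem ⟨0, ⟨le_rfl, hh⟩, hd0.le⟩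
  refine ⟨sSup T, fun v hv hvt => ?_, fun v htv hvh => ?_⟩
  · have hseg : v ∈ segment ℝ 0 (sSup T) := by rw [segment_eq_Icc htT.1.1]; exact ⟨hv, hvt⟩
    exact (hd.le_on_segment (mem_univ _) (mem_univ _) hseg).trans (max_le hd0.le htT.2)
  · by_contra hdv
    exact htv.not_ge (le_csSup hT.bddAbove ⟨⟨htT.1.1.trans htv.le, hvh⟩, not_lt.1 hdv⟩)

theorem ConcaveOn.integral_comp_le_of_crossing {α : Type*} [MeasurableSpace α] {μ : Measure α}
    {G : ℝ → ℝ} (hG : ConcaveOn ℝ (Ici 0) G) {u l : α → ℝ} {w : ℝ}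
    (hu : Integrable u μ) (hl : Integrable l μ) (hGu : Integrable (fun x => G (u x)) μ)
    (hGl : Integrable (fun x => G (l x)) μ) (hmean : ∫ x, u x ∂μ = ∫ x, l x ∂μ)
    (hcross : ∀ᵐ x ∂μ, (0 ≤ u x ∧ u x ≤ l x ∧ l x ≤ w) ∨ (w ≤ l x ∧ l x ≤ u x)) :
    ∫ x, G (u x) ∂μ ≤ ∫ x, G (l x) ∂μ := by
  rcases lt_or_ge 0 w with hw | hw
  · obtain ⟨K, hK⟩ := hG.exists_le_add_mul_sub hw
    have hKd : Integrable (fun x => K * (u x - l x)) μ := (hu.sub hl).const_mul K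
    calc ∫ x, G (u x) ∂μ ≤ ∫ x, (G (l x) + K * (u x - l x)) ∂μ :=
          integral_mono_ae hGu (hGl.add hKd) (hcross.mono fun x hx => hK _ _ hx)
      _ = ∫ x, G (l x) ∂μ := by
          rw [integral_add hGl hKd, integral_const_mul,
            integral_sub hu hl, hmean, sub_self, mul_zero, add_zero]
  · -- for `w ≤ 0` both alternatives give `l ≤ u`, and equal means force `u = l` a.e.
    have hle : 0 ≤ᵐ[μ] fun x => u x - l x := hcross.mono fun x hx => by
      rcases hx with ⟨h0, -, hlw⟩ | ⟨-, hlu⟩ <;> simp only [Pi.zero_apply] <;> linarith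
    have heq := (integral_eq_zero_iff_of_nonneg_ae hle (hu.sub hl)).1
      (by rw [integral_sub hu hl, hmean, sub_self])
    exact (integral_congr_ae (heq.mono fun x hx => by
      simp only [Pi.zero_apply, sub_eq_zero] at hx; rw [hx])).le

theorem Monotone.integrable_comp_of_ae_mem_Icc {α : Type*} [MeasurableSpace α] {μ : Measure α}
    [IsFiniteMeasure μ] {G : ℝ → ℝ} (hG : Monotone G) {φ : α → ℝ} (hφ : Measurable φ) {a b : ℝ}
    (hab : ∀ᵐ x ∂μ, φ x ∈ Icc a b) : Integrable (fun x => G (φ x)) μ :=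
  .of_bound (hG.measurable.comp hφ).aestronglyMeasurable (max |G a| |G b|)
    (hab.mono fun _ hx => abs_le_max_abs_abs (hG hx.1) (hG hx.2))

theorem isClosed_setOf_ae_nonneg {α : Type*} [MeasurableSpace α] {μ : Measure α}
    {F : ℝ → α → ℝ} (hF : ∀ x, Continuous fun Y => F Y x) :
    IsClosed {Y | ∀ᵐ x ∂μ, 0 ≤ F Y x} := by
  refine isSeqClosed_iff_isClosed.1 fun Ys Y hYs hlim => ?_
  filter_upwards [ae_all_iff.2 hYs] with x hx
  exact ge_of_tendsto ((hF x).tendsto Y |>.comp hlim) (Eventually.of_forall hx)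

theorem ae_withDensity_mem {α : Type*} [MeasurableSpace α] {μ : Measure α} {f : α → ENNReal}
    {s : Set α} (hs : MeasurableSet s) (hf : ∀ x ∉ s, f x = 0) :
    ∀ᵐ x ∂μ.withDensity f, x ∈ s := by
  rw [ae_iff]
  change μ.withDensity f sᶜ = 0
  rw [withDensity_apply _ hs.compl, setLIntegral_congr_fun hs.compl hf, lintegral_zero]

namespace Stmt9

section Mechanism

variable {x p : ℝ → ℝ}

theorem monotone_utility (hx : ∀ v, 0 ≤ x v) (hIC : ∀ v v', v * x v' - p v' ≤ v * x v - p v) :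
    Monotone fun v => v * x v - p v := fun a b hab => by
  nlinarith [hIC b a, hx a]

theorem utility_le_add (hx : ∀ v, x v ≤ 1) (hIC : ∀ v v', v * x v' - p v' ≤ v * x v - p v)
    {a b : ℝ} (hab : a ≤ b) : b * x b - p b ≤ a * x a - p a + (b - a) := by
  nlinarith [hIC a b, hx b]

theorem convexOn_utility (hIC : ∀ v v', v * x v' - p v' ≤ v * x v - p v) :
    ConvexOn ℝ univ fun v => v * x v - p v := by
  refine ⟨convex_univ, fun a _ b _ θ θ' hθ hθ' hθθ' => ?_⟩
  simp only [smul_eq_mul]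
  set z := θ * a + θ' * b
  have hz : z * x z - p z = θ * (a * x z - p z) + θ' * (b * x z - p z) := by
    linear_combination p z * hθθ'
  rw [hz]
  exact add_le_add (mul_le_mul_of_nonneg_left (hIC a z) hθ)
    (mul_le_mul_of_nonneg_left (hIC b z) hθ')

end Mechanism

theorem hObj_eq_eExp_add (ν : Measure ℝ) (g : ℝ → EReal) (c : ℝ) (x p : ℝ → ℝ) :
    hObj ν g c x p = eExp ν (fun v => g (v * x v - p v)) + ((c + p 0 : ℝ) : EReal) := by
  rw [hObj, eExp]
  split_ifs
  · rw [← EReal.coe_add, add_assoc]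
  · rw [EReal.bot_add]

noncomputable def constValue (ν : Measure ℝ) (g : ℝ → EReal) (c Y : ℝ) : EReal :=
  eExp ν (fun v => g (Y * (v - ∫ v, v ∂ν) + c)) + ((Y * ∫ v, v ∂ν : ℝ) : EReal)

noncomputable def constValueReal (ν : Measure ℝ) (G : ℝ → ℝ) (c Y : ℝ) : ℝ :=
  ∫ v, G (Y * (v - ∫ v, v ∂ν) + c) ∂ν + Y * ∫ v, v ∂ν

theorem hObj_const (ν : Measure ℝ) (g : ℝ → EReal) (c Y : ℝ) :
    hObj ν g c (fun _ => Y) (fun _ => Y * (∫ v, v ∂ν) - c) = constValue ν g c Y := by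
  have hu : ∀ v, v * Y - (Y * ∫ v, v ∂ν - c) = Y * (v - ∫ v, v ∂ν) + c := fun v => by ring
  simp only [hObj_eq_eExp_add, constValue, hu, add_sub_cancel]

structure IsConcaveTradeoff (g : ℝ → EReal) (G : ℝ → ℝ) : Prop where
  monotone : Monotone G
  concaveOn : ConcaveOn ℝ (Ici 0) G
  eq_coe : ∀ z, 0 ≤ z → g z = G z
  eq_bot : ∀ z, z < 0 → g z = ⊥

namespace IsConcaveTradeoff

variable {g : ℝ → EReal} {G : ℝ → ℝ}

theorem bot_lt_iff (hg : IsConcaveTradeoff g G) (z : ℝ) : ⊥ < g z ↔ 0 ≤ z := by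
  refine ⟨fun hz => not_lt.1 fun hneg => ?_, fun hz => ?_⟩
  · rw [hg.eq_bot z hneg] at hz
    exact lt_irrefl _ hz
  · rw [hg.eq_coe z hz]
    exact EReal.bot_lt_coe _

theorem lt_top (hg : IsConcaveTradeoff g G) (z : ℝ) : g z < ⊤ := by
  rcases lt_or_ge z 0 with hz | hz
  · rw [hg.eq_bot z hz]
    exact bot_lt_top
  · rw [hg.eq_coe z hz]
    exact EReal.coe_lt_top _

variable {ν : Measure ℝ} {φ : ℝ → ℝ}

theorem eExp_comp (hg : IsConcaveTradeoff g G) (hφ : ∀ᵐ v ∂ν, 0 ≤ φ v)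
    (hint : Integrable (fun v => G (φ v)) ν) :
    eExp ν (fun v => g (φ v)) = ((∫ v, G (φ v) ∂ν : ℝ) : EReal) := by
  have hcongr : (fun v => (g (φ v)).toReal) =ᵐ[ν] fun v => G (φ v) :=
    hφ.mono fun v hv => by simp only [hg.eq_coe _ hv, EReal.toReal_coe]
  rw [eExp, if_pos ⟨hφ.mono fun v hv => ⟨(hg.bot_lt_iff _).2 hv, hg.lt_top _⟩,
    hint.congr hcongr.symm⟩, integral_congr_ae hcongr]

theorem eExp_comp_of_not_ae (hg : IsConcaveTradeoff g G) (hφ : ¬ ∀ᵐ v ∂ν, 0 ≤ φ v) :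
    eExp ν (fun v => g (φ v)) = ⊥ := by
  rw [eExp, if_neg]
  rintro ⟨hfin, -⟩
  exact hφ (hfin.mono fun v hv => (hg.bot_lt_iff _).1 hv.1)

end IsConcaveTradeoff

section OneStep

variable {ν : Measure ℝ} {h c Y : ℝ} {g : ℝ → EReal} {G : ℝ → ℝ}

theorem integral_affine [IsProbabilityMeasure ν] (hint : Integrable (fun v : ℝ => v) ν) (Y c : ℝ) :
    ∫ v, (Y * (v - ∫ v, v ∂ν) + c) ∂ν = c := by
  have hint' : Integrable (fun v => Y * (v - ∫ v, v ∂ν)) ν :=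
    (hint.sub (integrable_const _)).const_mul Y
  rw [integral_add hint' (integrable_const c), integral_const_mul,
    integral_sub hint (integrable_const _)]
  simp

theorem integral_const_mech [IsProbabilityMeasure ν] (hint : Integrable (fun v : ℝ => v) ν)
    (Y c : ℝ) : ∫ v, (v * Y - (Y * (∫ v, v ∂ν) - c)) ∂ν = c := by
  have hu : ∀ v, v * Y - (Y * ∫ v, v ∂ν - c) = Y * (v - ∫ v, v ∂ν) + c := fun v => by ring
  simp_rw [hu]
  exact integral_affine hint Y c

theorem budget_nonneg [IsProbabilityMeasure ν] (hint : Integrable (fun v : ℝ => v) ν)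
    (hfeas : ∀ᵐ v ∂ν, 0 ≤ Y * (v - ∫ v, v ∂ν) + c) : 0 ≤ c :=
  integral_affine hint Y c ▸ integral_nonneg_of_ae hfeas

theorem ae_affine_pos [NullSingletonClass ν] (hY : Y ≠ 0)
    (hfeas : ∀ᵐ v ∂ν, 0 ≤ Y * (v - ∫ v, v ∂ν) + c) :
    ∀ᵐ v ∂ν, 0 < Y * (v - ∫ v, v ∂ν) + c := by
  filter_upwards [hfeas, Measure.ae_ne ν (∫ v, v ∂ν - c / Y)] with v hv hne
  refine hv.lt_of_ne fun h0 => hne ?_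
  field_simp
  linarith

theorem budget_pos [IsProbabilityMeasure ν] [NullSingletonClass ν]
    (hint : Integrable (fun v : ℝ => v) ν) (hY : Y ≠ 0)
    (hfeas : ∀ᵐ v ∂ν, 0 ≤ Y * (v - ∫ v, v ∂ν) + c) : 0 < c := by
  refine (budget_nonneg hint hfeas).lt_of_ne fun hc => ?_
  have hzero := (integral_eq_zero_iff_of_nonneg_ae hfeas
    ((hint.sub (integrable_const _)).const_mul Y |>.add (integrable_const c))).1
    ((integral_affine hint Y c).trans hc.symm)
  obtain ⟨v, hpos, hv⟩ := ((ae_affine_pos hY hfeas).and hzero).exists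
  exact hpos.ne' hv

theorem ae_affine_mem_Icc (hsupp : ∀ᵐ v ∂ν, v ∈ Icc 0 h) (hY : Y ∈ Icc (0 : ℝ) 1) :
    ∀ᵐ v ∂ν, Y * (v - ∫ v, v ∂ν) + c ∈ Icc (c - ∫ v, v ∂ν) (c + h) := by
  have hM : 0 ≤ ∫ v, v ∂ν := integral_nonneg_of_ae (hsupp.mono fun v hv => hv.1)
  filter_upwards [hsupp] with v hv
  constructor <;> nlinarith [hY.1, hY.2, hv.1, hv.2]

variable [IsProbabilityMeasure ν]

theorem nonneg_of_ae_mem_Icc (hsupp : ∀ᵐ v ∂ν, v ∈ Icc 0 h) : 0 ≤ h :=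
  let ⟨_, hv⟩ := hsupp.exists
  hv.1.trans hv.2

theorem integrable_id_of_ae_mem_Icc (hsupp : ∀ᵐ v ∂ν, v ∈ Icc 0 h) :
    Integrable (fun v : ℝ => v) ν :=
  monotone_id.integrable_comp_of_ae_mem_Icc measurable_id hsupp

theorem integral_id_pos [NullSingletonClass ν] (hsupp : ∀ᵐ v ∂ν, v ∈ Icc 0 h) :
    0 < ∫ v, v ∂ν := by
  have hnonneg : 0 ≤ᵐ[ν] fun v => v := hsupp.mono fun v hv => hv.1
  refine (integral_nonneg_of_ae hnonneg).lt_of_ne fun h0 => ?_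
  have hzero := (integral_eq_zero_iff_of_nonneg_ae hnonneg
    (integrable_id_of_ae_mem_Icc hsupp)).1 h0.symm
  obtain ⟨v, hv, hv0⟩ := (hzero.and (Measure.ae_ne ν 0)).exists
  exact hv0 hv

theorem _root_.Monotone.integrable_comp_affine (hG : Monotone G)
    (hsupp : ∀ᵐ v ∂ν, v ∈ Icc 0 h) (hY : Y ∈ Icc (0 : ℝ) 1) :
    Integrable (fun v => G (Y * (v - ∫ v, v ∂ν) + c)) ν :=
  hG.integrable_comp_of_ae_mem_Icc (by fun_prop) (ae_affine_mem_Icc hsupp hY)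

theorem integral_mem_Icc_of_le_add (hsupp : ∀ᵐ v ∂ν, v ∈ Icc 0 h) {u : ℝ → ℝ}
    (hu : Monotone u) (hlip : ∀ a b, a ≤ b → u b ≤ u a + (b - a)) :
    ∫ v, u v ∂ν ∈ Icc (u 0) (u 0 + ∫ v, v ∂ν) := by
  have hint : Integrable u ν := hu.integrable_comp_of_ae_mem_Icc measurable_id hsupp
  have hid := integrable_id_of_ae_mem_Icc hsupp
  constructor
  · simpa using integral_mono_ae (integrable_const (u 0)) hint (hsupp.mono fun v hv => hu hv.1)
  · have hid' : Integrable (fun v => u 0 + v) ν := (integrable_const _).add hid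
    have := integral_mono_ae hint hid' (hsupp.mono fun v hv => by simpa using hlip 0 v hv.1)
    rwa [integral_add (integrable_const _) hid, integral_const, probReal_univ, one_smul] at this

theorem exists_ae_crossing (hsupp : ∀ᵐ v ∂ν, v ∈ Icc 0 h) {u l : ℝ → ℝ}
    (hd : ConvexOn ℝ univ fun v => u v - l v) (h0 : u 0 = l 0) (hl : Monotone l)
    (hu : Integrable u ν) (hli : Integrable l ν) (hmean : ∫ v, u v ∂ν = ∫ v, l v ∂ν)
    (hpos : ∀ᵐ v ∂ν, 0 ≤ u v) :
    ∃ w, 0 ≤ w ∧ ∀ᵐ v ∂ν, (0 ≤ u v ∧ u v ≤ l v ∧ l v ≤ w) ∨ (w ≤ l v ∧ l v ≤ u v) := by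
  obtain ⟨t, hle, hgt⟩ := hd.exists_sign_change (by simp [h0]) (nonneg_of_ae_mem_Icc hsupp)
  have hcross : ∀ᵐ v ∂ν, (0 ≤ u v ∧ u v ≤ l v ∧ l v ≤ l t) ∨ (l t ≤ l v ∧ l v < u v) := by
    filter_upwards [hsupp, hpos] with v hv huv
    rcases le_or_gt v t with hvt | hvt
    · exact .inl ⟨huv, sub_nonpos.1 (hle v hv.1 hvt), hl hvt⟩
    · exact .inr ⟨hl hvt.le, sub_pos.1 (hgt v hvt hv.2)⟩
  refine ⟨l t, not_lt.1 fun hlt => ?_,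
    hcross.mono fun v hv => hv.imp id fun hv' => ⟨hv'.1, hv'.2.le⟩⟩
  -- if `l t < 0` the first alternative never occurs, so `l < u` a.e., against `∫ u = ∫ l`
  have hlu : ∀ᵐ v ∂ν, l v < u v := hcross.mono fun v hv => by
    rcases hv with ⟨h₁, h₂, h₃⟩ | ⟨-, h⟩
    · linarith
    · exact h
  have hzero := (integral_eq_zero_iff_of_nonneg_ae (hlu.mono fun v hv => sub_nonneg.2 hv.le)
    (hu.sub hli)).1 (by rw [integral_sub hu hli, hmean, sub_self])
  obtain ⟨v, hv, hv0⟩ := (hlu.and hzero).exists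
  exact hv.ne' (sub_eq_zero.1 hv0)

end OneStep

namespace IsConcaveTradeoff

variable {ν : Measure ℝ} [IsProbabilityMeasure ν] {h c Y : ℝ} {g : ℝ → EReal} {G : ℝ → ℝ}

theorem constValue_eq (hg : IsConcaveTradeoff g G) (hsupp : ∀ᵐ v ∂ν, v ∈ Icc 0 h)
    (hY : Y ∈ Icc (0 : ℝ) 1) (hfeas : ∀ᵐ v ∂ν, 0 ≤ Y * (v - ∫ v, v ∂ν) + c) :
    constValue ν g c Y = constValueReal ν G c Y := by
  rw [constValue, hg.eExp_comp hfeas (hg.monotone.integrable_comp_affine hsupp hY),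
    constValueReal, EReal.coe_add]

omit [IsProbabilityMeasure ν] in
theorem constValue_of_not_ae (hg : IsConcaveTradeoff g G)
    (hfeas : ¬ ∀ᵐ v ∂ν, 0 ≤ Y * (v - ∫ v, v ∂ν) + c) : constValue ν g c Y = ⊥ := by
  rw [constValue, hg.eExp_comp_of_not_ae hfeas, EReal.bot_add]

theorem constValue_of_neg (hg : IsConcaveTradeoff g G) (hint : Integrable (fun v : ℝ => v) ν)
    (hc : c < 0) : constValue ν g c Y = ⊥ :=
  hg.constValue_of_not_ae fun hfeas => hc.not_ge (budget_nonneg hint hfeas)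

theorem exists_hObj_le_constValue [NullSingletonClass ν] (hg : IsConcaveTradeoff g G)
    (hsupp : ∀ᵐ v ∂ν, v ∈ Icc 0 h) {x p : ℝ → ℝ} (hx : ∀ v, x v ∈ Icc (0 : ℝ) 1)
    (hIC : ∀ v v', v * x v' - p v' ≤ v * x v - p v) (hc : ∫ v, (v * x v - p v) ∂ν = c) :
    ∃ Y ∈ Icc (0 : ℝ) 1, hObj ν g c x p ≤ constValue ν g c Y := by
  have hmono : Monotone fun v => v * x v - p v := monotone_utility (fun v => (hx v).1) hIC
  by_cases hpos : ∀ᵐ v ∂ν, 0 ≤ v * x v - p v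
  swap
  · refine ⟨0, left_mem_Icc.2 zero_le_one, ?_⟩
    rw [hObj_eq_eExp_add, hg.eExp_comp_of_not_ae hpos, EReal.bot_add]
    exact bot_le
  set u : ℝ → ℝ := fun v => v * x v - p v
  set M := ∫ v, v ∂ν
  have hM : 0 < M := integral_id_pos hsupp
  have hbudget : c ∈ Icc (u 0) (u 0 + M) := hc ▸ integral_mem_Icc_of_le_add hsupp hmono
    fun a b hab => utility_le_add (fun v => (hx v).2) hIC hab
  -- `l` is the affine utility with the same value at `0` and the same mean as `u`
  set Y := (c - u 0) / M
  have hY : Y ∈ Icc (0 : ℝ) 1 := ⟨div_nonneg (by linarith [hbudget.1]) hM.le,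
    (div_le_one hM).2 (by linarith [hbudget.2])⟩
  have hYM : Y * M = c - u 0 := div_mul_cancel₀ _ hM.ne'
  set l : ℝ → ℝ := fun v => Y * (v - M) + c
  have hid := integrable_id_of_ae_mem_Icc hsupp
  have hu : Integrable u ν := hmono.integrable_comp_of_ae_mem_Icc measurable_id hsupp
  have hl : Integrable l ν := ((hid.sub (integrable_const M)).const_mul Y).add (integrable_const c)
  have hlc : ConcaveOn ℝ univ l := ⟨convex_univ, fun a _ b _ θ θ' _ _ hθθ' => le_of_eq <| by
    simp only [l, smul_eq_mul]
    linear_combination (c - Y * M) * hθθ'⟩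
  have hlmono : Monotone l := fun a b hab => by
    simp only [l]
    nlinarith [hY.1]
  obtain ⟨w, hw, hcross⟩ := exists_ae_crossing hsupp ((convexOn_utility hIC).sub hlc)
    (by simp only [l]; linarith) hlmono hu hl (by rw [hc, integral_affine hid]) hpos
  have hlpos : ∀ᵐ v ∂ν, 0 ≤ l v := hcross.mono fun v hv => by
    rcases hv with ⟨h₁, h₂, -⟩ | ⟨h₁, -⟩ <;> linarith
  have hGu : Integrable (fun v => G (u v)) ν :=
    (hg.monotone.comp hmono).integrable_comp_of_ae_mem_Icc measurable_id hsupp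
  refine ⟨Y, hY, ?_⟩
  rw [hObj_eq_eExp_add, hg.eExp_comp hpos hGu, hg.constValue_eq hsupp hY hlpos, ← EReal.coe_add,
    EReal.coe_le_coe_iff, constValueReal, show c + p 0 = Y * M by simp only [u] at hYM; linarith]
  exact add_le_add (hg.concaveOn.integral_comp_le_of_crossing hu hl hGu
    (hg.monotone.integrable_comp_affine hsupp hY) (by rw [hc, integral_affine hid]) hcross) le_rfl

theorem hStep_eq_iSup [NullSingletonClass ν] (hg : IsConcaveTradeoff g G)
    (hsupp : ∀ᵐ v ∂ν, v ∈ Icc 0 h) (c : ℝ) :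
    hStep ν g c = ⨆ Y ∈ Icc (0 : ℝ) 1, constValue ν g c Y := by
  refine le_antisymm (sSup_le ?_) (iSup₂_le fun Y hY => le_sSup ?_)
  · rintro _ ⟨x, p, hx, hIC, hc, rfl⟩
    obtain ⟨Y, hY, hle⟩ := hg.exists_hObj_le_constValue hsupp hx hIC hc
    exact hle.trans (le_iSup₂ (f := fun Y (_ : Y ∈ Icc (0 : ℝ) 1) => constValue ν g c Y) Y hY)
  · exact ⟨fun _ => Y, fun _ => Y * (∫ v, v ∂ν) - c, fun _ => hY, fun _ _ => le_rfl,
      integral_const_mech (integrable_id_of_ae_mem_Icc hsupp) Y c, (hObj_const ν g c Y).symm⟩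

theorem constValue_le_hStep [NullSingletonClass ν] (hg : IsConcaveTradeoff g G)
    (hsupp : ∀ᵐ v ∂ν, v ∈ Icc 0 h) (hY : Y ∈ Icc (0 : ℝ) 1) :
    constValue ν g c Y ≤ hStep ν g c := by
  rw [hg.hStep_eq_iSup hsupp]
  exact le_iSup₂ (f := fun Y (_ : Y ∈ Icc (0 : ℝ) 1) => constValue ν g c Y) Y hY

theorem hStep_eq_of_isMaxOn [NullSingletonClass ν] (hg : IsConcaveTradeoff g G)
    (hsupp : ∀ᵐ v ∂ν, v ∈ Icc 0 h) (hY : Y ∈ Icc (0 : ℝ) 1)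
    (hmax : IsMaxOn (constValue ν g c) (Icc 0 1) Y) : hStep ν g c = constValue ν g c Y :=
  le_antisymm (hg.hStep_eq_iSup hsupp c ▸ iSup₂_le hmax) (hg.constValue_le_hStep hsupp hY)

theorem continuousOn_constValueReal [NullSingletonClass ν] (hg : IsConcaveTradeoff g G)
    (hsupp : ∀ᵐ v ∂ν, v ∈ Icc 0 h) (hc : 0 < c) :
    ContinuousOn (constValueReal ν G c)
      {Y | Y ∈ Icc (0 : ℝ) 1 ∧ ∀ᵐ v ∂ν, 0 ≤ Y * (v - ∫ v, v ∂ν) + c} := by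
  intro Y₀ hY₀
  refine ContinuousWithinAt.add ?_ (continuous_id.mul continuous_const).continuousWithinAt
  have hGcont : ContinuousOn G (Ioi 0) :=
    interior_Ici (a := (0 : ℝ)) ▸ hg.concaveOn.continuousOn_interior
  -- `G` may jump at `0`, but since `ν` has no atoms the argument is a.e. positive at `Y₀`
  have hpos : ∀ᵐ v ∂ν, 0 < Y₀ * (v - ∫ v, v ∂ν) + c := by
    rcases eq_or_ne Y₀ 0 with rfl | hY0
    · exact ae_of_all _ fun v => by simpa using hc
    · exact ae_affine_pos hY0 hY₀.2
  refine continuousWithinAt_of_dominated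
    (bound := fun _ => max |G (c - ∫ v, v ∂ν)| |G (c + h)|)
    (Eventually.of_forall fun Y => (hg.monotone.measurable.comp (by fun_prop)).aestronglyMeasurable)
    (eventually_nhdsWithin_of_forall fun Y hY => (ae_affine_mem_Icc hsupp hY.1).mono fun v hv =>
      abs_le_max_abs_abs (hg.monotone hv.1) (hg.monotone hv.2))
    (integrable_const _) (hpos.mono fun v hv => ?_)
  exact ((hGcont.continuousAt (Ioi_mem_nhds hv)).comp
    (f := fun Y => Y * (v - ∫ v, v ∂ν) + c) (by fun_prop)).continuousWithinAt

theorem exists_isMaxOn_constValue [NullSingletonClass ν] (hg : IsConcaveTradeoff g G)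
    (hsupp : ∀ᵐ v ∂ν, v ∈ Icc 0 h) (hc : 0 ≤ c) :
    ∃ Y ∈ Icc (0 : ℝ) 1, (∀ᵐ v ∂ν, 0 ≤ Y * (v - ∫ v, v ∂ν) + c) ∧
      IsMaxOn (constValue ν g c) (Icc 0 1) Y := by
  set K := {Y | Y ∈ Icc (0 : ℝ) 1 ∧ ∀ᵐ v ∂ν, 0 ≤ Y * (v - ∫ v, v ∂ν) + c}
  have hK : IsCompact K := isCompact_Icc.inter_right (isClosed_setOf_ae_nonneg fun v => by fun_prop)
  have h0K : (0 : ℝ) ∈ K := ⟨left_mem_Icc.2 zero_le_one, ae_of_all _ fun v => by simpa using hc⟩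
  have hcont : ContinuousOn (constValueReal ν G c) K := by
    rcases hc.lt_or_eq with hc | rfl
    · exact hg.continuousOn_constValueReal hsupp hc
    · refine Subsingleton.continuousOn (fun Y hY Y' hY' => ?_) _
      have hzero : ∀ Y ∈ K, Y = 0 := fun Y hY => not_ne_iff.1 fun hY0 =>
        (budget_pos (integrable_id_of_ae_mem_Icc hsupp) hY0 hY.2).false
      rw [hzero Y hY, hzero Y' hY']
  obtain ⟨Y, hYK, hmax⟩ := hK.exists_isMaxOn ⟨0, h0K⟩ hcont
  refine ⟨Y, hYK.1, hYK.2, fun Y' hY' => ?_⟩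
  by_cases hfeas : ∀ᵐ v ∂ν, 0 ≤ Y' * (v - ∫ v, v ∂ν) + c
  · rw [mem_ofPred_eq, hg.constValue_eq hsupp hY' hfeas, hg.constValue_eq hsupp hYK.1 hYK.2]
    exact EReal.coe_le_coe_iff.2 (hmax ⟨hY', hfeas⟩)
  · rw [mem_ofPred_eq, hg.constValue_of_not_ae hfeas]
    exact bot_le

theorem exists_constValue_eq_hStep [NullSingletonClass ν] (hg : IsConcaveTradeoff g G)
    (hsupp : ∀ᵐ v ∂ν, v ∈ Icc 0 h) (c : ℝ) :
    ∃ Y ∈ Icc (0 : ℝ) 1, constValue ν g c Y = hStep ν g c := by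
  rcases lt_or_ge c 0 with hc | hc
  · have hbot : ∀ Y, constValue ν g c Y = ⊥ :=
      fun Y => hg.constValue_of_neg (integrable_id_of_ae_mem_Icc hsupp) hc
    have hmax : IsMaxOn (constValue ν g c) (Icc 0 1) 0 := fun Y _ => (hbot Y).trans_le bot_le
    exact ⟨0, left_mem_Icc.2 zero_le_one,
      (hg.hStep_eq_of_isMaxOn hsupp (left_mem_Icc.2 zero_le_one) hmax).symm⟩
  · obtain ⟨Y, hY, -, hmax⟩ := hg.exists_isMaxOn_constValue hsupp hc
    exact ⟨Y, hY, (hg.hStep_eq_of_isMaxOn hsupp hY hmax).symm⟩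

theorem exists_hStep_eq_coe [NullSingletonClass ν] (hg : IsConcaveTradeoff g G)
    (hsupp : ∀ᵐ v ∂ν, v ∈ Icc 0 h) (hc : 0 ≤ c) :
    ∃ Y ∈ Icc (0 : ℝ) 1, (∀ᵐ v ∂ν, 0 ≤ Y * (v - ∫ v, v ∂ν) + c) ∧
      hStep ν g c = constValueReal ν G c Y := by
  obtain ⟨Y, hY, hfeas, hmax⟩ := hg.exists_isMaxOn_constValue hsupp hc
  refine ⟨Y, hY, hfeas, ?_⟩
  rw [hg.hStep_eq_of_isMaxOn hsupp hY hmax, hg.constValue_eq hsupp hY hfeas]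

theorem constValueReal_le_toReal_hStep [NullSingletonClass ν] (hg : IsConcaveTradeoff g G)
    (hsupp : ∀ᵐ v ∂ν, v ∈ Icc 0 h) (hY : Y ∈ Icc (0 : ℝ) 1)
    (hfeas : ∀ᵐ v ∂ν, 0 ≤ Y * (v - ∫ v, v ∂ν) + c) :
    constValueReal ν G c Y ≤ (hStep ν g c).toReal := by
  obtain ⟨Y', -, -, hY'⟩ :=
    hg.exists_hStep_eq_coe hsupp (budget_nonneg (integrable_id_of_ae_mem_Icc hsupp) hfeas)
  have hle := hg.constValue_le_hStep hsupp hY (c := c)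
  rw [hg.constValue_eq hsupp hY hfeas, hY'] at hle
  rw [hY', EReal.toReal_coe]
  exact_mod_cast hle

theorem constValueReal_mono (hg : IsConcaveTradeoff g G) (hsupp : ∀ᵐ v ∂ν, v ∈ Icc 0 h)
    (hY : Y ∈ Icc (0 : ℝ) 1) {c₁ c₂ : ℝ} (hc : c₁ ≤ c₂) :
    constValueReal ν G c₁ Y ≤ constValueReal ν G c₂ Y :=
  add_le_add (integral_mono (hg.monotone.integrable_comp_affine hsupp hY)
    (hg.monotone.integrable_comp_affine hsupp hY) fun _ => hg.monotone (by linarith)) le_rfl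

theorem constValueReal_concave (hg : IsConcaveTradeoff g G) (hsupp : ∀ᵐ v ∂ν, v ∈ Icc 0 h)
    {c₁ c₂ Y₁ Y₂ a b : ℝ} (hY₁ : Y₁ ∈ Icc (0 : ℝ) 1) (hY₂ : Y₂ ∈ Icc (0 : ℝ) 1)
    (hfeas₁ : ∀ᵐ v ∂ν, 0 ≤ Y₁ * (v - ∫ v, v ∂ν) + c₁)
    (hfeas₂ : ∀ᵐ v ∂ν, 0 ≤ Y₂ * (v - ∫ v, v ∂ν) + c₂) (ha : 0 ≤ a) (hb : 0 ≤ b) (hab : a + b = 1) :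
    a * constValueReal ν G c₁ Y₁ + b * constValueReal ν G c₂ Y₂ ≤
      constValueReal ν G (a * c₁ + b * c₂) (a * Y₁ + b * Y₂) := by
  set M := ∫ v, v ∂ν
  have hY : a * Y₁ + b * Y₂ ∈ Icc (0 : ℝ) 1 := convex_Icc 0 1 hY₁ hY₂ ha hb hab
  have hint₁ := (hg.monotone.integrable_comp_affine hsupp hY₁ (c := c₁)).const_mul a
  have hint₂ := (hg.monotone.integrable_comp_affine hsupp hY₂ (c := c₂)).const_mul b
  have hle : ∫ v, (a * G (Y₁ * (v - M) + c₁) + b * G (Y₂ * (v - M) + c₂)) ∂ν ≤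
      ∫ v, G ((a * Y₁ + b * Y₂) * (v - M) + (a * c₁ + b * c₂)) ∂ν := by
    refine integral_mono_ae (hint₁.add hint₂) (hg.monotone.integrable_comp_affine hsupp hY) ?_
    filter_upwards [hfeas₁, hfeas₂] with v hv₁ hv₂
    have hconc := hg.concaveOn.2 hv₁ hv₂ ha hb hab
    have harg : a • (Y₁ * (v - M) + c₁) + b • (Y₂ * (v - M) + c₂) =
        (a * Y₁ + b * Y₂) * (v - M) + (a * c₁ + b * c₂) := by
      simp only [smul_eq_mul]
      ring
    rwa [harg] at hconc
  rw [integral_add hint₁ hint₂, integral_const_mul, integral_const_mul] at hle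
  simp only [constValueReal]
  linarith

end IsConcaveTradeoff

theorem isConcaveTradeoff_hStep {ν : Measure ℝ} [IsProbabilityMeasure ν] [NullSingletonClass ν]
    {h : ℝ} {g : ℝ → EReal} {G : ℝ → ℝ} (hg : IsConcaveTradeoff g G)
    (hsupp : ∀ᵐ v ∂ν, v ∈ Icc 0 h) :
    IsConcaveTradeoff (hStep ν g) fun c => (hStep ν g (max c 0)).toReal := by
  have hval : ∀ c, 0 ≤ c → ∃ Y ∈ Icc (0 : ℝ) 1, (∀ᵐ v ∂ν, 0 ≤ Y * (v - ∫ v, v ∂ν) + c) ∧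
      (hStep ν g (max c 0)).toReal = constValueReal ν G c Y := fun c hc => by
    obtain ⟨Y, hY, hfeas, heq⟩ := hg.exists_hStep_eq_coe hsupp hc
    exact ⟨Y, hY, hfeas, by rw [max_eq_left hc, heq, EReal.toReal_coe]⟩
  refine ⟨fun a b hab => ?_, ⟨convex_Ici 0, fun c₁ hc₁ c₂ hc₂ a b ha hb hab => ?_⟩,
    fun z hz => ?_, fun z hz => ?_⟩
  · obtain ⟨Y, hY, hfeas, heq⟩ := hval _ (le_max_right a 0)
    have hab' : max a 0 ≤ max b 0 := max_le_max_right 0 hab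
    rw [max_eq_left (le_max_right a 0)] at heq
    calc (hStep ν g (max a 0)).toReal = constValueReal ν G (max a 0) Y := heq
      _ ≤ constValueReal ν G (max b 0) Y := hg.constValueReal_mono hsupp hY hab'
      _ ≤ (hStep ν g (max b 0)).toReal := hg.constValueReal_le_toReal_hStep hsupp hY
          (hfeas.mono fun v hv => by linarith)
  · obtain ⟨Y₁, hY₁, hfeas₁, heq₁⟩ := hval c₁ hc₁
    obtain ⟨Y₂, hY₂, hfeas₂, heq₂⟩ := hval c₂ hc₂
    have hc : 0 ≤ a * c₁ + b * c₂ := convex_Ici 0 hc₁ hc₂ ha hb hab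
    simp only [smul_eq_mul, heq₁, heq₂, max_eq_left hc]
    refine (hg.constValueReal_concave hsupp hY₁ hY₂ hfeas₁ hfeas₂ ha hb hab).trans
      (hg.constValueReal_le_toReal_hStep hsupp (convex_Icc 0 1 hY₁ hY₂ ha hb hab) ?_)
    filter_upwards [hfeas₁, hfeas₂] with v hv₁ hv₂
    linarith [mul_nonneg ha hv₁, mul_nonneg hb hv₂]
  · obtain ⟨Y, -, -, heq⟩ := hg.exists_hStep_eq_coe hsupp hz
    rw [max_eq_left hz, heq, EReal.toReal_coe]
  · obtain ⟨Y, -, hYeq⟩ := hg.exists_constValue_eq_hStep hsupp z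
    rw [← hYeq, hg.constValue_of_neg (integrable_id_of_ae_mem_Icc hsupp) hz]

theorem isConcaveTradeoff_hHatAux_zero {k : ℕ} (μ : Fin k → Measure ℝ) :
    IsConcaveTradeoff (hHatAux μ 0) 0 :=
  ⟨monotone_const, concaveOn_const 0 (convex_Ici 0), fun z hz => by simp [hHatAux, hz],
    fun z hz => by simp [hHatAux, hz.not_ge]⟩

theorem hHatAux_succ {k m : ℕ} (μ : Fin k → Measure ℝ) (hm : m < k) :
    hHatAux μ (m + 1) = hStep (μ ⟨k - (m + 1), by omega⟩) (hHatAux μ m) := by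
  funext c
  simp [hHatAux, hm]

theorem hHat_eq_hStep {k : ℕ} (μ : Fin k → Measure ℝ) (i : Fin k) :
    hHat μ i = hStep (μ i) (hHat μ (i + 1)) := by
  have hk : k - (i : ℕ) = k - (i + 1) + 1 := by omega
  rw [hHat, hk, hHatAux_succ μ (by omega)]
  congr
  omega

theorem exists_isConcaveTradeoff_hHat {k : ℕ} {h : Fin k → ℝ} {μ : Fin k → Measure ℝ}
    [∀ i, IsProbabilityMeasure (μ i)] [∀ i, NullSingletonClass (μ i)]
    (hsupp : ∀ i, ∀ᵐ v ∂μ i, v ∈ Icc 0 (h i)) (i : ℕ) : ∃ G, IsConcaveTradeoff (hHat μ i) G := by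
  suffices ∀ m ≤ k, ∃ G, IsConcaveTradeoff (hHatAux μ m) G from this _ (Nat.sub_le k i)
  intro m hm
  induction m with
  | zero => exact ⟨0, isConcaveTradeoff_hHatAux_zero μ⟩
  | succ m ih =>
    obtain ⟨G, hG⟩ := ih (by omega)
    rw [hHatAux_succ μ (by omega)]
    exact ⟨_, isConcaveTradeoff_hStep hG (hsupp _)⟩

end Stmt9

open Stmt9 in
theorem stmt_9_general {k : ℕ} (h : Fin k → ℝ)
    (f : Fin k → ℝ → ℝ)
    (hfsupp : ∀ i t, t ∉ Set.Icc 0 (h i) → f i t = 0)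
    (μ : Fin k → Measure ℝ)
    (hμ : ∀ i, μ i = MeasureTheory.volume.withDensity (fun t => ENNReal.ofReal (f i t)))
    (hprob : ∀ i, IsProbabilityMeasure (μ i)) :
    ∀ (i : Fin k) (c : ℝ),
      (∃ Y ∈ Set.Icc (0 : ℝ) 1,
        (∫ v, (v * Y - (Y * (∫ v, v ∂(μ i)) - c)) ∂(μ i)) = c ∧
        hObj (μ i) (hHat μ ((i : ℕ) + 1)) c
            (fun _ => Y) (fun _ => Y * (∫ v, v ∂(μ i)) - c)
          = hHat μ (i : ℕ) c)
      ∧ hHat μ (i : ℕ) c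
          = sSup {r : EReal | ∃ Y ∈ Set.Icc (0 : ℝ) 1,
              r = eExp (μ i)
                    (fun v => hHat μ ((i : ℕ) + 1) (Y * (v - ∫ v, v ∂(μ i)) + c))
                  + ((Y * ∫ v, v ∂(μ i) : ℝ) : EReal)} := by
  intro i c
  have hnull : ∀ j, NullSingletonClass (μ j) := fun j => by
    rw [hμ j]
    infer_instance
  have hsupp : ∀ j, ∀ᵐ v ∂μ j, v ∈ Icc 0 (h j) := fun j => by
    rw [hμ j]
    exact ae_withDensity_mem measurableSet_Icc fun t ht => by
      rw [hfsupp j t ht, ENNReal.ofReal_zero]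
  obtain ⟨G, hG⟩ := exists_isConcaveTradeoff_hHat hsupp (i + 1)
  obtain ⟨Y, hY, hYeq⟩ := hG.exists_constValue_eq_hStep (hsupp i) c
  rw [hHat_eq_hStep μ i]
  refine ⟨⟨Y, hY, integral_const_mech (integrable_id_of_ae_mem_Icc (hsupp i)) Y c, by
    rw [hObj_const, hYeq]⟩, ?_⟩
  rw [hG.hStep_eq_iSup (hsupp i), ← sSup_image]
  congr 1
  ext r
  simp only [mem_image, constValue, eq_comm, mem_ofPred_eq]

open Stmt9 in
/-- **Lemma 3.10** (the tradeoff recursion is optimized by constant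
mechanisms, and reduces to a one-dimensional optimization over `Y ∈ [0,1]`). -/
theorem stmt_9 {k : ℕ} (h : Fin k → ℝ) (hh : ∀ i, 0 ≤ h i)
    (f : Fin k → ℝ → ℝ) (hf : ∀ i t, 0 ≤ f i t)
    (hfsupp : ∀ i t, t ∉ Set.Icc 0 (h i) → f i t = 0)
    (μ : Fin k → Measure ℝ)
    (hμ : ∀ i, μ i = MeasureTheory.volume.withDensity (fun t => ENNReal.ofReal (f i t)))
    (hprob : ∀ i, IsProbabilityMeasure (μ i)) :
    ∀ (i : Fin k) (c : ℝ),
      (∃ Y ∈ Set.Icc (0 : ℝ) 1,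
        (∫ v, (v * Y - (Y * (∫ v, v ∂(μ i)) - c)) ∂(μ i)) = c ∧
        hObj (μ i) (hHat μ ((i : ℕ) + 1)) c
            (fun _ => Y) (fun _ => Y * (∫ v, v ∂(μ i)) - c)
          = hHat μ (i : ℕ) c)
      ∧ hHat μ (i : ℕ) c
          = sSup {r : EReal | ∃ Y ∈ Set.Icc (0 : ℝ) 1,
              r = eExp (μ i)
                    (fun v => hHat μ ((i : ℕ) + 1) (Y * (v - ∫ v, v ∂(μ i)) + c))
                  + ((Y * ∫ v, v ∂(μ i) : ℝ) : EReal)} :=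
  stmt_9_general h f hfsupp μ hμ hprob
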